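/- arXiv:math/9810023 — 5 statements merged into one kernel-verified Lean document; each statement's English description precedes it below -/
import Mathlib

section
/- For a point (a,b) ∈ ℝ², its inverse stereographic projection σ(a,b) lies on the plane {x sin φ − z cos φ = 0} if and only if (a − tan φ)² + b² = sec² φ, provided cos φ ≠ 0. Hence the stereographic projection of the rotated equator R^y_φ(C) is the circle of center (tan φ, 0) and radius |sec φ|. -/
/-- Stereographic projection from the unit sphere in ℝ³ (minus the north pole) to ℝ². -/
noncomputable def stereo (p : ℝ × ℝ × ℝ) : ℝ × ℝ :=
  (p.1 / (1 - p.2.2), p.2.1 / (1 - p.2.2))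

/-- Inverse stereographic projection. -/
noncomputable def invStereo (q : ℝ × ℝ) : ℝ × ℝ × ℝ :=
  (2 * q.1 / (q.1 ^ 2 + q.2 ^ 2 + 1), 2 * q.2 / (q.1 ^ 2 + q.2 ^ 2 + 1),
    (q.1 ^ 2 + q.2 ^ 2 - 1) / (q.1 ^ 2 + q.2 ^ 2 + 1))

/-- Rotation of ℝ³ about the y-axis by angle φ. -/
noncomputable def rotY (φ : ℝ) (p : ℝ × ℝ × ℝ) : ℝ × ℝ × ℝ :=
  (p.1 * Real.cos φ - p.2.2 * Real.sin φ, p.2.1, p.1 * Real.sin φ + p.2.2 * Real.cos φ)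

/-- The equator circle of S². -/
noncomputable def equator : Set (ℝ × ℝ × ℝ) := {p | p.1 ^ 2 + p.2.1 ^ 2 = 1 ∧ p.2.2 = 0}

/-!
The rotated equator is the great circle cut out of S² by the plane x sin φ − z cos φ = 0.
Pulling the plane equation back along σ and clearing the denominator a² + b² + 1 gives
2a sin φ − (a² + b² − 1) cos φ = 0, which after division by cos φ is the circle equation.
Since σ and the stereographic projection are mutually inverse between ℝ² and S² minus the
north pole, which the rotated equator avoids, the image of the rotated equator under the
projection is the preimage of that great circle under σ, i.e. the circle.
-/

open Real

def unitSphere : Set (ℝ × ℝ × ℝ) := {p | p.1 ^ 2 + p.2.1 ^ 2 + p.2.2 ^ 2 = 1}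

lemma invStereo_mem_unitSphere (q : ℝ × ℝ) : invStereo q ∈ unitSphere := by
  have hr : q.1 ^ 2 + q.2 ^ 2 + 1 ≠ 0 := by positivity
  simp only [unitSphere, Set.mem_ofPred_eq, invStereo]
  field_simp
  ring

lemma stereo_invStereo (q : ℝ × ℝ) : stereo (invStereo q) = q := by
  have hr : q.1 ^ 2 + q.2 ^ 2 + 1 ≠ 0 := by positivity
  have hden : 1 - (q.1 ^ 2 + q.2 ^ 2 - 1) / (q.1 ^ 2 + q.2 ^ 2 + 1)
      = 2 / (q.1 ^ 2 + q.2 ^ 2 + 1) := by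
    field_simp
    ring
  simp only [stereo, invStereo, hden]
  ext <;> field_simp

lemma invStereo_stereo {p : ℝ × ℝ × ℝ} (hp : p ∈ unitSphere) (hN : p.2.2 ≠ 1) :
    invStereo (stereo p) = p := by
  obtain ⟨x, y, z⟩ := p
  simp only [unitSphere, Set.mem_ofPred_eq] at hp hN
  have hz : 1 - z ≠ 0 := sub_ne_zero.mpr (Ne.symm hN)
  -- on the sphere, x² + y² = (1 - z)(1 + z)
  have hr : (x / (1 - z)) ^ 2 + (y / (1 - z)) ^ 2 + 1 = 2 / (1 - z) := by
    field_simp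
    linear_combination hp
  simp only [stereo, invStereo, hr]
  ext <;> field_simp
  linear_combination hp

lemma stereo_image_eq_invStereo_preimage {S : Set (ℝ × ℝ × ℝ)} (hS : S ⊆ unitSphere)
    (hN : ∀ p ∈ S, p.2.2 ≠ 1) : stereo '' S = invStereo ⁻¹' S := by
  ext q
  constructor
  · rintro ⟨p, hp, rfl⟩
    rwa [Set.mem_preimage, invStereo_stereo (hS hp) (hN p hp)]
  · exact fun hq => ⟨invStereo q, hq, stereo_invStereo q⟩

lemma rotY_neg_rotY (φ : ℝ) (p : ℝ × ℝ × ℝ) : rotY φ (rotY (-φ) p) = p := by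
  have pyth := sin_sq_add_cos_sq φ
  simp only [rotY, cos_neg, sin_neg]
  ext
  · linear_combination p.1 * pyth
  · rfl
  · linear_combination p.2.2 * pyth

lemma rotY_image_equator (φ : ℝ) :
    rotY φ '' equator = {p ∈ unitSphere | p.1 * sin φ - p.2.2 * cos φ = 0} := by
  have pyth := sin_sq_add_cos_sq φ
  ext p
  constructor
  · rintro ⟨⟨x, y, z⟩, ⟨hxy, rfl⟩, rfl⟩
    simp only [unitSphere, rotY, Set.mem_ofPred_eq] at hxy ⊢
    constructor
    · linear_combination hxy + x ^ 2 * pyth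
    · ring
  · rintro ⟨hp, hplane⟩
    refine ⟨rotY (-φ) p, ⟨?_, ?_⟩, rotY_neg_rotY φ p⟩
    · simp only [unitSphere, rotY, cos_neg, sin_neg, Set.mem_ofPred_eq] at hp ⊢
      linear_combination hp + (p.1 ^ 2 + p.2.2 ^ 2) * pyth
        - (p.1 * sin φ - p.2.2 * cos φ) * hplane
    · simp only [rotY, cos_neg, sin_neg]
      linear_combination -hplane

lemma rotY_image_equator_ne_north {φ : ℝ} (hφ : cos φ ≠ 0) :
    ∀ p ∈ rotY φ '' equator, p.2.2 ≠ 1 := by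
  rw [rotY_image_equator]
  rintro ⟨x, y, z⟩ ⟨hp, hplane⟩ rfl
  simp only [unitSphere, Set.mem_ofPred_eq] at hp hplane
  have hx : x = 0 := by nlinarith [sq_nonneg y]
  exact hφ (by simpa [hx] using hplane)

lemma invStereo_plane_iff {φ : ℝ} (hφ : cos φ ≠ 0) (a b : ℝ) :
    (invStereo (a, b)).1 * sin φ - (invStereo (a, b)).2.2 * cos φ = 0 ↔
      (a - tan φ) ^ 2 + b ^ 2 = (1 / cos φ) ^ 2 := by
  have hr : a ^ 2 + b ^ 2 + 1 ≠ 0 := by positivity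
  have pyth := sin_sq_add_cos_sq φ
  have hplane : (invStereo (a, b)).1 * sin φ - (invStereo (a, b)).2.2 * cos φ
      = (2 * a * sin φ - (a ^ 2 + b ^ 2 - 1) * cos φ) / (a ^ 2 + b ^ 2 + 1) := by
    simp only [invStereo]
    ring
  have hcircle : (a - tan φ) ^ 2 + b ^ 2 - (1 / cos φ) ^ 2
      = -(2 * a * sin φ - (a ^ 2 + b ^ 2 - 1) * cos φ) / cos φ := by
    rw [tan_eq_sin_div_cos]
    field_simp
    linear_combination pyth
  rw [hplane, ← sub_eq_zero (a := (a - tan φ) ^ 2 + b ^ 2), hcircle, div_eq_zero_iff,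
    div_eq_zero_iff, neg_eq_zero]
  simp only [hr, hφ, or_false]

/-- σ(a,b) lies on the plane {x sin φ − z cos φ = 0} iff (a − tan φ)² + b² = sec² φ
    (for cos φ ≠ 0); hence the stereographic projection of the rotated equator
    R^y_φ(C) is the circle with center (tan φ, 0) and radius |sec φ|. -/
theorem stereo_rotated_equator (φ : ℝ) (hφ : Real.cos φ ≠ 0) :
    (∀ a b : ℝ,
      (invStereo (a, b)).1 * Real.sin φ - (invStereo (a, b)).2.2 * Real.cos φ = 0 ↔
        (a - Real.tan φ) ^ 2 + b ^ 2 = (1 / Real.cos φ) ^ 2) ∧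
    stereo '' (rotY φ '' equator) =
      {q : ℝ × ℝ | (q.1 - Real.tan φ) ^ 2 + q.2 ^ 2 = (1 / Real.cos φ) ^ 2} := by
  refine ⟨invStereo_plane_iff hφ, ?_⟩
  have hsphere : rotY φ '' equator ⊆ unitSphere := by
    rw [rotY_image_equator]
    exact Set.sep_subset _ _
  rw [stereo_image_eq_invStereo_preimage hsphere (rotY_image_equator_ne_north hφ)]
  ext ⟨a, b⟩
  rw [Set.mem_preimage, rotY_image_equator, Set.mem_ofPred_eq, Set.mem_ofPred_eq,
    invStereo_plane_iff hφ]
  exact and_iff_right (invStereo_mem_unitSphere _)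
end

section
/- Every rotation R of ℝ³ (i.e., every linear isometry of ℝ³ with determinant 1) can be written as a composition R = R^z_ψ ∘ R^y_φ ∘ R^z_θ of a rotation about the z-axis, a rotation about the y-axis, and a rotation about the z-axis (Euler angle decomposition). -/
set_option maxHeartbeats 800000

open Real

open Matrix

/-- Rotation matrix of ℝ³ about the z-axis by angle α. -/
noncomputable def Rz (α : ℝ) : Matrix (Fin 3) (Fin 3) ℝ :=
  !![cos α, -sin α, 0; sin α, cos α, 0; 0, 0, 1]

/-- Rotation matrix of ℝ³ about the y-axis by angle φ. -/
noncomputable def Ry (φ : ℝ) : Matrix (Fin 3) (Fin 3) ℝ :=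
  !![cos φ, 0, -sin φ; 0, 1, 0; sin φ, 0, cos φ]

lemma Rz_transpose (α : ℝ) :
    (Rz α)ᵀ = !![cos α, sin α, 0; -sin α, cos α, 0; 0, 0, 1] := by
  ext i j; fin_cases i <;> fin_cases j <;> rfl

lemma Ry_transpose (φ : ℝ) :
    (Ry φ)ᵀ = !![cos φ, 0, sin φ; 0, 1, 0; -sin φ, 0, cos φ] := by
  ext i j; fin_cases i <;> fin_cases j <;> rfl

lemma Rz_orth (α : ℝ) : Rz α * (Rz α)ᵀ = 1 := by
  rw [Rz_transpose, Rz, Matrix.mul_fin_three, Matrix.one_fin_three]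
  congr 1 <;> ext i j <;> fin_cases i <;> fin_cases j <;>
    simp [Matrix.vecHead, Matrix.vecTail] <;> nlinarith [sin_sq_add_cos_sq α]

lemma Ry_orth (φ : ℝ) : Ry φ * (Ry φ)ᵀ = 1 := by
  rw [Ry_transpose, Ry, Matrix.mul_fin_three, Matrix.one_fin_three]
  congr 1 <;> ext i j <;> fin_cases i <;> fin_cases j <;>
    simp [Matrix.vecHead, Matrix.vecTail] <;> nlinarith [sin_sq_add_cos_sq φ]

lemma Rz_det (α : ℝ) : (Rz α).det = 1 := by
  simp [Rz, Matrix.det_fin_three]; nlinarith [sin_sq_add_cos_sq α]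

lemma Ry_det (φ : ℝ) : (Ry φ).det = 1 := by
  simp [Ry, Matrix.det_fin_three]; nlinarith [sin_sq_add_cos_sq φ]

lemma exists_angle (x y : ℝ) (h : x^2 + y^2 = 1) : ∃ θ, cos θ = x ∧ sin θ = y := by
  have hx1 : -1 ≤ x := by nlinarith
  have hx2 : x ≤ 1 := by nlinarith
  have hs : sin (arccos x) = Real.sqrt (1 - x^2) := sin_arccos x
  have hy : Real.sqrt (1 - x^2) = |y| := by
    rw [show (1 : ℝ) - x^2 = y^2 by linarith, Real.sqrt_sq_eq_abs]
  rcases le_or_gt 0 y with hy0 | hy0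
  · exact ⟨arccos x, cos_arccos hx1 hx2, by rw [hs, hy, abs_of_nonneg hy0]⟩
  · exact ⟨-arccos x, by rw [cos_neg]; exact cos_arccos hx1 hx2,
      by rw [sin_neg, hs, hy, abs_of_neg hy0]; ring⟩

lemma exists_angle_r (x y r : ℝ) (hr : 0 ≤ r) (h : x^2 + y^2 = r^2) :
    ∃ θ, r * cos θ = x ∧ r * sin θ = y := by
  rcases eq_or_lt_of_le hr with h0 | h0
  · refine ⟨0, ?_, ?_⟩ <;> rw [← h0] <;> nlinarith [sq_nonneg x, sq_nonneg y]
  · have hr0 : r ≠ 0 := ne_of_gt h0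
    obtain ⟨θ, hc, hs⟩ := exists_angle (x/r) (y/r) (by field_simp; linarith)
    refine ⟨θ, ?_, ?_⟩
    · rw [hc]; field_simp
    · rw [hs]; field_simp

/-- Euler angle decomposition: every rotation of ℝ³ (orthogonal matrix of
    determinant 1) is a composition R^z_ψ ∘ R^y_φ ∘ R^z_θ. -/
theorem euler_decomposition (M : Matrix (Fin 3) (Fin 3) ℝ)
    (horth : M * M.transpose = 1) (hdet : M.det = 1) :
    ∃ θ φ ψ : ℝ, M = Rz ψ * Ry φ * Rz θ := by
  have horth' : Mᵀ * M = 1 := mul_eq_one_comm.mp horth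
  -- third column is a unit vector
  have hcol : M 0 2 ^ 2 + M 1 2 ^ 2 + M 2 2 ^ 2 = 1 := by
    have h := congrFun (congrFun horth' 2) 2
    simp [Matrix.mul_apply, Fin.sum_univ_three, Matrix.transpose_apply,
      Matrix.one_apply] at h
    nlinarith [h]
  set r : ℝ := Real.sqrt (M 0 2 ^ 2 + M 1 2 ^ 2) with hrdef
  have hr2 : r ^ 2 = M 0 2 ^ 2 + M 1 2 ^ 2 := Real.sq_sqrt (by positivity)
  obtain ⟨φ, hφc, hφs⟩ := exists_angle (M 2 2) (-r) (by nlinarith)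
  obtain ⟨ψ, hψc, hψs⟩ := exists_angle_r (M 0 2) (M 1 2) r (Real.sqrt_nonneg _) hr2.symm
  set P : Matrix (Fin 3) (Fin 3) ℝ := Rz ψ * Ry φ with hPdef
  have hPmat : P = !![cos ψ * cos φ, -sin ψ, -(cos ψ * sin φ);
      sin ψ * cos φ, cos ψ, -(sin ψ * sin φ); sin φ, 0, cos φ] := by
    rw [hPdef, Rz, Ry, Matrix.mul_fin_three]
    congr 1 <;> ext i j <;> fin_cases i <;> fin_cases j <;>
      simp [Matrix.vecHead, Matrix.vecTail] <;> ring
  have hPorth : P * Pᵀ = 1 := by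
    calc P * Pᵀ = Rz ψ * (Ry φ * (Ry φ)ᵀ) * (Rz ψ)ᵀ := by
          rw [hPdef, Matrix.transpose_mul]
          simp only [Matrix.mul_assoc]
      _ = 1 := by rw [Ry_orth, mul_one, Rz_orth]
  have hPorth' : Pᵀ * P = 1 := mul_eq_one_comm.mp hPorth
  -- the third columns of M and P agree
  have hcolM : ∀ i, M i 2 = P i 2 := by
    intro i
    fin_cases i <;> rw [hPmat] <;> simp <;>
      [ (linear_combination -hψc + cos ψ * hφs);
        (linear_combination -hψs + sin ψ * hφs);
        (linear_combination -hφc) ]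
  set N : Matrix (Fin 3) (Fin 3) ℝ := Pᵀ * M with hNdef
  have hMP : M = P * N := by
    rw [hNdef, ← Matrix.mul_assoc, hPorth, Matrix.one_mul]
  have hNcol : ∀ i, N i 2 = (1 : Matrix (Fin 3) (Fin 3) ℝ) i 2 := by
    intro i
    have h1 : N i 2 = (Pᵀ * P) i 2 := by
      simp only [hNdef, Matrix.mul_apply, Fin.sum_univ_three, Matrix.transpose_apply]
      rw [hcolM 0, hcolM 1, hcolM 2]
    rw [h1, hPorth']
  have hN02 : N 0 2 = 0 := by simpa [Matrix.one_apply] using hNcol 0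
  have hN12 : N 1 2 = 0 := by simpa [Matrix.one_apply] using hNcol 1
  have hN22 : N 2 2 = 1 := by simpa [Matrix.one_apply] using hNcol 2
  have hNorth : N * Nᵀ = 1 := by
    calc N * Nᵀ = (Pᵀ * M) * (Mᵀ * P) := by
          rw [hNdef, Matrix.transpose_mul Pᵀ M, Matrix.transpose_transpose]
      _ = Pᵀ * ((M * Mᵀ) * P) := by simp only [Matrix.mul_assoc]
      _ = 1 := by rw [horth, Matrix.one_mul, hPorth']
  have hNorth' : Nᵀ * N = 1 := mul_eq_one_comm.mp hNorth
  -- third row of N is (0,0,1)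
  have hrow : N 2 0 * N 2 0 + N 2 1 * N 2 1 + N 2 2 * N 2 2 = 1 := by
    have h := congrFun (congrFun hNorth 2) 2
    simpa [Matrix.mul_apply, Fin.sum_univ_three, Matrix.transpose_apply,
      Matrix.one_apply] using h
  have hN20 : N 2 0 = 0 := by
    have h0 : N 2 0 * N 2 0 = 0 := by nlinarith [mul_self_nonneg (N 2 0), mul_self_nonneg (N 2 1), hN22]
    exact mul_self_eq_zero.mp h0
  have hN21 : N 2 1 = 0 := by
    have h0 : N 2 1 * N 2 1 = 0 := by nlinarith [mul_self_nonneg (N 2 0), mul_self_nonneg (N 2 1), hN22]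
    exact mul_self_eq_zero.mp h0
  -- column relations
  have e1 : N 0 0 * N 0 0 + N 1 0 * N 1 0 = 1 := by
    have h := congrFun (congrFun hNorth' 0) 0
    simp [Matrix.mul_apply, Fin.sum_univ_three, Matrix.transpose_apply,
      Matrix.one_apply, hN20] at h
    linarith
  have e2 : N 0 0 * N 0 1 + N 1 0 * N 1 1 = 0 := by
    have h := congrFun (congrFun hNorth' 0) 1
    simp [Matrix.mul_apply, Fin.sum_univ_three, Matrix.transpose_apply,
      Matrix.one_apply, hN20, hN21] at h
    linarith
  have hdetP : P.det = 1 := by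
    rw [hPdef, Matrix.det_mul, Rz_det, Ry_det, mul_one]
  have hdetN : N.det = 1 := by
    rw [hNdef, Matrix.det_mul, Matrix.det_transpose, hdetP, hdet, mul_one]
  have e3 : N 0 0 * N 1 1 - N 0 1 * N 1 0 = 1 := by
    rw [Matrix.det_fin_three] at hdetN
    rw [hN02, hN12, hN20, hN21, hN22] at hdetN
    linarith [hdetN]
  obtain ⟨θ, hθc, hθs⟩ := exists_angle (N 0 0) (N 1 0) (by nlinarith [e1])
  have hd : N 1 1 = N 0 0 := by
    linear_combination N 0 0 * e3 + N 1 0 * e2 - N 1 1 * e1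
  have hb : N 0 1 = -N 1 0 := by
    linear_combination -N 1 0 * e3 + N 0 0 * e2 - N 0 1 * e1
  have hNRz : N = Rz θ := by
    ext i j
    fin_cases i <;> fin_cases j <;>
      simp [Rz, hN02, hN12, hN20, hN21, hN22, hb, hd, ← hθc, ← hθs]
  exact ⟨θ, φ, ψ, by rw [hMP, hNRz, hPdef]⟩
end

section
/- Every rotation R of ℝ⁴ (orthogonal linear map of determinant 1) can be decomposed as R = R₀ ∘ R^{xw}_ψ ∘ R^{zw}_φ ∘ R^{xy}_θ, where R₀ is the trivial extension to ℝ⁴ of a rotation of ℝ³ = {(x,y,z,0)} and R^{xw}_ψ, R^{zw}_φ, R^{xy}_θ are elementary rotations in the indicated coordinate two-planes. -/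
/-!
The last row of `P = Rxw ψ * Rzw φ * Rxy θ` is
`(sin ψ cos θ, -sin ψ sin θ, cos ψ sin φ, cos ψ cos φ)`, i.e. hyperspherical coordinates on S³,
so the angles can be chosen to make it the last row of `M`. Then `M * Pᵀ` is a rotation whose
last row is e₄; orthogonality forces its last column to be e₄ as well, so it is the trivial
extension of a rotation `N` of ℝ³, and `M = extend3 N * P`.
-/

open Real

/-- Elementary rotation of ℝ⁴ in the x,w-plane. -/
noncomputable def Rxw (ψ : ℝ) : Matrix (Fin 4) (Fin 4) ℝ :=
  !![cos ψ, 0, 0, -sin ψ; 0, 1, 0, 0; 0, 0, 1, 0; sin ψ, 0, 0, cos ψ]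

/-- Elementary rotation of ℝ⁴ in the z,w-plane. -/
noncomputable def Rzw (φ : ℝ) : Matrix (Fin 4) (Fin 4) ℝ :=
  !![1, 0, 0, 0; 0, 1, 0, 0; 0, 0, cos φ, -sin φ; 0, 0, sin φ, cos φ]

/-- Elementary rotation of ℝ⁴ in the x,y-plane. -/
noncomputable def Rxy (θ : ℝ) : Matrix (Fin 4) (Fin 4) ℝ :=
  !![cos θ, -sin θ, 0, 0; sin θ, cos θ, 0, 0; 0, 0, 1, 0; 0, 0, 0, 1]

/-- The trivial extension to ℝ⁴ of a linear map of ℝ³ = {(x,y,z,0)}, fixing e₄. -/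
noncomputable def extend3 (N : Matrix (Fin 3) (Fin 3) ℝ) : Matrix (Fin 4) (Fin 4) ℝ :=
  !![N 0 0, N 0 1, N 0 2, 0;
     N 1 0, N 1 1, N 1 2, 0;
     N 2 0, N 2 1, N 2 2, 0;
     0, 0, 0, 1]

open Matrix

section Orthogonal

variable {n R : Type*} [Fintype n] [DecidableEq n] [CommRing R] {A : Matrix n n R} {i : n}

lemma sum_mul_self_row_eq_one (hA : A * Aᵀ = 1) (i : n) :
    ∑ k, A i k * A i k = 1 := by
  simpa [mul_apply] using congrFun (congrFun hA i) i

lemma row_mul_transpose_eq_single {B : Matrix n n R} (hB : B * Bᵀ = 1)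
    (h : A i = B i) : (A * Bᵀ) i = Pi.single i 1 := by
  rw [mul_apply_eq_vecMul, h, ← mul_apply_eq_vecMul, hB]
  ext j
  exact one_eq_pi_single

lemma transpose_row_eq_single (hA : A * Aᵀ = 1) (h : A i = Pi.single i 1) :
    Aᵀ i = Pi.single i 1 := by
  have hcol : Aᵀ *ᵥ Pi.single i 1 = Pi.single i 1 := by
    rw [mulVec_single_one]; exact h
  calc Aᵀ i = A *ᵥ Pi.single i 1 := by rw [mulVec_single_one]; rfl
    _ = A *ᵥ (Aᵀ *ᵥ Pi.single i 1) := by rw [hcol]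
    _ = Pi.single i 1 := by rw [mulVec_mulVec, hA, one_mulVec]

lemma mul_mul_transpose_eq_one {B : Matrix n n R} (hA : A * Aᵀ = 1) (hB : B * Bᵀ = 1) :
    A * B * (A * B)ᵀ = 1 := by
  rw [transpose_mul, mul_assoc, ← mul_assoc B, hB, one_mul, hA]

end Orthogonal

lemma exists_polar_angle (a b : ℝ) :
    ∃ θ, a = √(a ^ 2 + b ^ 2) * cos θ ∧ b = √(a ^ 2 + b ^ 2) * sin θ := by
  have hnorm : ‖(⟨a, b⟩ : ℂ)‖ = √(a ^ 2 + b ^ 2) := by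
    rw [Complex.norm_def, Complex.normSq_mk]; ring_nf
  refine ⟨Complex.arg ⟨a, b⟩, ?_, ?_⟩
  · rw [← hnorm, Complex.norm_mul_cos_arg]
  · rw [← hnorm, Complex.norm_mul_sin_arg]

lemma exists_hyperspherical_angles (u : Fin 4 → ℝ) (hu : ∑ k, u k ^ 2 = 1) :
    ∃ θ φ ψ, u = ![sin ψ * cos θ, -(sin ψ * sin θ), cos ψ * sin φ, cos ψ * cos φ] := by
  rw [Fin.sum_univ_four] at hu
  obtain ⟨θ, h0, h1⟩ := exists_polar_angle (u 0) (-u 1)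
  obtain ⟨φ, h3, h2⟩ := exists_polar_angle (u 3) (u 2)
  obtain ⟨ψ, hc, hs⟩ := exists_polar_angle √(u 3 ^ 2 + u 2 ^ 2) √(u 0 ^ 2 + (-u 1) ^ 2)
  have hone : √(√(u 3 ^ 2 + u 2 ^ 2) ^ 2 + √(u 0 ^ 2 + (-u 1) ^ 2) ^ 2) = 1 := by
    rw [sq_sqrt (by positivity), sq_sqrt (by positivity), ← sqrt_one]; congr 1; linarith
  rw [hone, one_mul] at hc hs
  refine ⟨θ, φ, ψ, ?_⟩
  rw [hs] at h0 h1
  rw [hc] at h2 h3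
  ext k
  fin_cases k <;> simp [h0, ← h1, h2, h3]

lemma Rxw_mul_transpose_self (ψ : ℝ) : Rxw ψ * (Rxw ψ)ᵀ = 1 := by
  ext i j
  fin_cases i <;> fin_cases j <;>
    simp [Rxw, mul_apply, Fin.sum_univ_four, one_apply, ← sq, mul_comm]

lemma Rzw_mul_transpose_self (φ : ℝ) : Rzw φ * (Rzw φ)ᵀ = 1 := by
  ext i j
  fin_cases i <;> fin_cases j <;>
    simp [Rzw, mul_apply, Fin.sum_univ_four, one_apply, ← sq, mul_comm]

lemma Rxy_mul_transpose_self (θ : ℝ) : Rxy θ * (Rxy θ)ᵀ = 1 := by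
  ext i j
  fin_cases i <;> fin_cases j <;>
    simp [Rxy, mul_apply, Fin.sum_univ_four, one_apply, ← sq, mul_comm]

lemma det_Rxw (ψ : ℝ) : (Rxw ψ).det = 1 := by
  simp [Rxw, det_succ_row_zero, Fin.sum_univ_succ, Fin.succAbove, ← sq,
    Odd.neg_one_pow (by decide : Odd 3)]

lemma det_Rzw (φ : ℝ) : (Rzw φ).det = 1 := by
  simp [Rzw, det_succ_row_zero, Fin.sum_univ_succ, Fin.succAbove, ← sq]

lemma det_Rxy (θ : ℝ) : (Rxy θ).det = 1 := by
  simp [Rxy, det_succ_row_zero, Fin.sum_univ_succ, Fin.succAbove, ← sq]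

lemma row_three_Rxw_mul_Rzw_mul_Rxy (ψ φ θ : ℝ) :
    (Rxw ψ * Rzw φ * Rxy θ) 3 =
      ![sin ψ * cos θ, -(sin ψ * sin θ), cos ψ * sin φ, cos ψ * cos φ] := by
  ext k
  fin_cases k <;> simp [Rxw, Rzw, Rxy, mul_apply, Fin.sum_univ_four]

lemma extend3_mul (N N' : Matrix (Fin 3) (Fin 3) ℝ) :
    extend3 (N * N') = extend3 N * extend3 N' := by
  ext i j
  fin_cases i <;> fin_cases j <;> simp [extend3, mul_apply, Fin.sum_univ_succ]

lemma extend3_transpose (N : Matrix (Fin 3) (Fin 3) ℝ) : extend3 Nᵀ = (extend3 N)ᵀ := by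
  ext i j
  fin_cases i <;> fin_cases j <;> rfl

lemma extend3_one : extend3 1 = 1 := by
  ext i j
  fin_cases i <;> fin_cases j <;> rfl

lemma extend3_apply_castSucc (N : Matrix (Fin 3) (Fin 3) ℝ) (i j : Fin 3) :
    extend3 N i.castSucc j.castSucc = N i j := by
  fin_cases i <;> fin_cases j <;> rfl

lemma extend3_injective : Function.Injective extend3 := by
  intro N N' h
  ext i j
  simpa only [extend3_apply_castSucc] using congrFun (congrFun h i.castSucc) j.castSucc

lemma det_extend3 (N : Matrix (Fin 3) (Fin 3) ℝ) : (extend3 N).det = N.det := by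
  simp [extend3, det_succ_row_zero, Fin.sum_univ_succ, Fin.succAbove]

lemma extend3_submatrix_castSucc {A : Matrix (Fin 4) (Fin 4) ℝ} (hA : A * Aᵀ = 1)
    (h : A 3 = Pi.single 3 1) : extend3 (A.submatrix Fin.castSucc Fin.castSucc) = A := by
  have hcol (k : Fin 4) : A k 3 = (Pi.single 3 1 : Fin 4 → ℝ) k :=
    congrFun (transpose_row_eq_single hA h) k
  ext i j
  fin_cases i <;> fin_cases j <;> simp [extend3, hcol, h]

/-- Every rotation of ℝ⁴ decomposes as R₀ ∘ R^{xw}_ψ ∘ R^{zw}_φ ∘ R^{xy}_θ where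
    R₀ is the trivial extension of a rotation of ℝ³. -/
theorem four_dim_decomposition (M : Matrix (Fin 4) (Fin 4) ℝ)
    (horth : M * M.transpose = 1) (hdet : M.det = 1) :
    ∃ (N : Matrix (Fin 3) (Fin 3) ℝ) (θ φ ψ : ℝ),
      N * N.transpose = 1 ∧ N.det = 1 ∧
      M = extend3 N * Rxw ψ * Rzw φ * Rxy θ := by
  obtain ⟨θ, φ, ψ, hrow⟩ : ∃ θ φ ψ, M 3 = (Rxw ψ * Rzw φ * Rxy θ) 3 := by
    simp only [row_three_Rxw_mul_Rzw_mul_Rxy]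
    apply exists_hyperspherical_angles
    simpa [sq] using sum_mul_self_row_eq_one horth 3
  set P := Rxw ψ * Rzw φ * Rxy θ with hP_def
  have hP : P * Pᵀ = 1 := mul_mul_transpose_eq_one
    (mul_mul_transpose_eq_one (Rxw_mul_transpose_self ψ) (Rzw_mul_transpose_self φ))
    (Rxy_mul_transpose_self θ)
  set M' := M * Pᵀ with hM'_def
  have hM' : M' * M'ᵀ = 1 :=
    mul_mul_transpose_eq_one horth (by rw [transpose_transpose]; exact mul_eq_one_comm.mp hP)
  set N := M'.submatrix Fin.castSucc Fin.castSucc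
  have hN : extend3 N = M' := extend3_submatrix_castSucc hM' (row_mul_transpose_eq_single hP hrow)
  refine ⟨N, θ, φ, ψ, extend3_injective ?_, ?_, ?_⟩
  · rw [extend3_mul, extend3_transpose, hN, hM', extend3_one]
  · rw [← det_extend3, hN, det_mul, det_transpose, hdet, hP_def, det_mul, det_mul, det_Rxw,
      det_Rzw, det_Rxy]
    norm_num
  · calc M = M' * P := by rw [hM'_def, mul_assoc, mul_eq_one_comm.mp hP, mul_one]
      _ = extend3 N * Rxw ψ * Rzw φ * Rxy θ := by rw [hN, hP_def]; simp only [mul_assoc]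
end

section
/- An orthogonal matrix M with det M = 1 is a product of elementary rotation matrices, where an elementary rotation matrix acts as a 2×2 rotation in one coordinate plane and as the identity elsewhere. -/
/-!
Givens reduction, by induction on a block `U` of coordinates: an element of `SO(n)` that is the
identity outside `U × U` is a product of rotations in coordinate planes inside `U`. For `i ∉ U`,
rotations in the planes `(i, k)`, `k ∈ U`, clear the entries of column `i` in the rows of `U`, each
leaving the nonnegative entry `√(a² + b²)` at `(i, i)`. A nonnegative multiple of `e i` of norm one
is `e i`, so by orthogonality row and column `i` are `e i` and the matrix lives on `U`. For
`U = {i}` the matrix is diagonal and `det = 1` forces it to be `1`.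
-/

/-- The elementary rotation matrix of ℝⁿ rotating the coordinate two-plane
    spanned by `e k`, `e l` by angle θ and fixing the other coordinates. -/
noncomputable def elemRot (n : ℕ) (k l : Fin n) (θ : ℝ) : Matrix (Fin n) (Fin n) ℝ :=
  Matrix.of fun i j =>
    if i = k ∧ j = k then Real.cos θ
    else if i = k ∧ j = l then -Real.sin θ
    else if i = l ∧ j = k then Real.sin θ
    else if i = l ∧ j = l then Real.cos θ
    else if i = j then 1 else 0

namespace Matrix

section identityOutside

variable {ι R : Type*} [Fintype ι] [DecidableEq ι]

def identityOutside [Semiring R] (U : Finset ι) : Submonoid (Matrix ι ι R) where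
  carrier := {A | ∀ r c, (r ∉ U ∨ c ∉ U) → A r c = (1 : Matrix ι ι R) r c}
  one_mem' _ _ _ := rfl
  mul_mem' {A B} hA hB r c hrc := by
    rcases hrc with hr | hc
    · calc (A * B) r c = ((1 : Matrix ι ι R) * B) r c := by
            simp only [mul_apply, hA r _ (.inl hr)]
        _ = (1 : Matrix ι ι R) r c := by rw [one_mul, hB r c (.inl hr)]
    · calc (A * B) r c = (A * (1 : Matrix ι ι R)) r c := by
            simp only [mul_apply, hB _ c (.inr hc)]
        _ = (1 : Matrix ι ι R) r c := by rw [mul_one, hA r c (.inr hc)]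

lemma identityOutside_mono [Semiring R] {U V : Finset ι} (h : U ⊆ V) :
    identityOutside (R := R) U ≤ identityOutside V :=
  fun _ hA r c hrc => hA r c (hrc.imp (mt (h ·)) (mt (h ·)))

lemma mem_identityOutside_of_mem_insert [Semiring R] {N : Matrix ι ι R} {i : ι} {U : Finset ι}
    (hN : N ∈ identityOutside (insert i U)) (hcol : N *ᵥ Pi.single i 1 = Pi.single i 1)
    (hrow : Nᵀ *ᵥ Pi.single i 1 = Pi.single i 1) : N ∈ identityOutside U := by
  intro r c hrc
  by_cases hr : r = i
  · subst hr
    simpa [mulVec_single_one, one_apply, Pi.single_apply, eq_comm] using congrFun hrow c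
  by_cases hc : c = i
  · subst hc
    simpa [mulVec_single_one, one_apply, Pi.single_apply] using congrFun hcol r
  exact hN r c (by simpa [hr, hc] using hrc)

lemma eq_one_of_mem_identityOutside_singleton [CommRing R] {A : Matrix ι ι R} {i : ι}
    (hA : A ∈ identityOutside {i}) (hdet : A.det = 1) : A = 1 := by
  have hdiag : A = diagonal fun r => A r r := by
    ext r c
    by_cases hrc : r = c
    · simp [hrc]
    · rw [diagonal_apply_ne _ hrc, hA r c (by by_contra! h; simp_all), one_apply_ne hrc]
  have hii : A i i = 1 := by
    rw [← hdet, hdiag, det_diagonal, Finset.prod_eq_single i (fun r _ hr => ?_) (by simp)]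
    · simp
    · simpa using hA r r (.inl (by simpa using hr))
  ext r c
  by_cases h : r = i ∧ c = i
  · rw [h.1, h.2, hii, one_apply_eq]
  · exact hA r c (by simpa only [Finset.mem_singleton, not_and_or] using h)


end identityOutside

section orthogonalGroup

variable {ι R : Type*} [Fintype ι] [DecidableEq ι] [CommRing R] {N : Matrix ι ι R}

lemma transpose_mulVec_eq_of_mulVec_eq (hN : N ∈ orthogonalGroup ι R) {v : ι → R}
    (h : N *ᵥ v = v) : Nᵀ *ᵥ v = v := by
  conv_lhs => rw [← h]
  rw [mulVec_mulVec, (mem_orthogonalGroup_iff' ι R).mp hN, one_mulVec]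

lemma mulVec_dotProduct_mulVec_of_mem_orthogonalGroup (hN : N ∈ orthogonalGroup ι R)
    (v : ι → R) : (N *ᵥ v) ⬝ᵥ (N *ᵥ v) = v ⬝ᵥ v := by
  rw [dotProduct_mulVec, ← mulVec_transpose, mulVec_mulVec, (mem_orthogonalGroup_iff' ι R).mp hN,
    one_mulVec]

lemma eq_one_of_mulVec_single_eq_single [LinearOrder R] [IsStrictOrderedRing R]
    (hN : N ∈ orthogonalGroup ι R) {i : ι} {c : R} (h : N *ᵥ Pi.single i 1 = Pi.single i c)
    (hc : 0 ≤ c) : c = 1 := by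
  have hcc : c * c = 1 := by
    simpa [h] using mulVec_dotProduct_mulVec_of_mem_orthogonalGroup hN (Pi.single i 1)
  exact (mul_self_eq_one_iff.mp hcc).resolve_right (by linarith)

end orthogonalGroup

end Matrix

open Matrix

lemma Real.exists_rotation_eq_sqrt (a b : ℝ) :
    ∃ θ, Real.cos θ * a - Real.sin θ * b = √(a ^ 2 + b ^ 2) ∧
      Real.sin θ * a + Real.cos θ * b = 0 := by
  set z : ℂ := ⟨a, -b⟩
  have hz : ‖z‖ = √(a ^ 2 + b ^ 2) := by
    rw [Complex.norm_eq_sqrt_sq_add_sq, neg_sq]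
  have hre := Complex.norm_mul_cos_arg z
  have him := Complex.norm_mul_sin_arg z
  have hpyth := Real.sin_sq_add_cos_sq z.arg
  refine ⟨z.arg, ?_, ?_⟩
  · rw [← hz]
    linear_combination (-Real.cos z.arg) * hre - Real.sin z.arg * him + ‖z‖ * hpyth
  · linear_combination (-Real.sin z.arg) * hre + Real.cos z.arg * him

section elemRot

variable {n : ℕ} {k l : Fin n}

lemma elemRot_row (hkl : k ≠ l) (θ : ℝ) (r : Fin n) :
    elemRot n k l θ r =
      if r = k then Real.cos θ • Pi.single k 1 - Real.sin θ • Pi.single l 1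
      else if r = l then Real.sin θ • Pi.single k 1 + Real.cos θ • Pi.single l 1
      else Pi.single r 1 := by
  ext j
  by_cases hrk : r = k <;> by_cases hrl : r = l <;> by_cases hjk : j = k <;>
    by_cases hjl : j = l <;>
    simp_all [elemRot, Pi.single_apply, eq_comm]

lemma elemRot_mulVec_apply (hkl : k ≠ l) (θ : ℝ) (v : Fin n → ℝ) (r : Fin n) :
    (elemRot n k l θ *ᵥ v) r =
      if r = k then Real.cos θ * v k - Real.sin θ * v l
      else if r = l then Real.sin θ * v k + Real.cos θ * v l
      else v r := by
  change elemRot n k l θ r ⬝ᵥ v = _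
  rw [elemRot_row hkl]
  split_ifs <;> simp only [sub_dotProduct, add_dotProduct, smul_dotProduct, single_one_dotProduct,
    smul_eq_mul]

lemma elemRot_mul_elemRot (hkl : k ≠ l) (θ φ : ℝ) :
    elemRot n k l θ * elemRot n k l φ = elemRot n k l (θ + φ) := by
  refine ext_iff_mulVec.mpr fun v => funext fun r => ?_
  simp only [← mulVec_mulVec, elemRot_mulVec_apply hkl, if_pos, if_neg hkl.symm, Real.cos_add,
    Real.sin_add]
  split_ifs <;> ring

lemma elemRot_zero (hkl : k ≠ l) : elemRot n k l 0 = 1 := by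
  refine ext_iff_mulVec.mpr fun v => funext fun r => ?_
  rw [elemRot_mulVec_apply hkl, one_mulVec]
  split_ifs <;> simp_all

lemma transpose_elemRot (hkl : k ≠ l) (θ : ℝ) : (elemRot n k l θ)ᵀ = elemRot n k l (-θ) := by
  ext i j
  by_cases hik : i = k <;> by_cases hil : i = l <;> by_cases hjk : j = k <;>
    by_cases hjl : j = l <;>
    simp_all [elemRot, eq_comm]

lemma elemRot_mem_orthogonalGroup (hkl : k ≠ l) (θ : ℝ) :
    elemRot n k l θ ∈ orthogonalGroup (Fin n) ℝ := by
  rw [mem_orthogonalGroup_iff, transpose_elemRot hkl, elemRot_mul_elemRot hkl, add_neg_cancel,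
    elemRot_zero hkl]

lemma det_elemRot (hkl : k ≠ l) (θ : ℝ) : (elemRot n k l θ).det = 1 := by
  have hsq : (elemRot n k l θ).det * (elemRot n k l θ).det = 1 := by
    simpa [det_transpose] using
      congrArg det ((mem_orthogonalGroup_iff _ _).mp (elemRot_mem_orthogonalGroup hkl θ))
  -- a rotation is the square of the rotation by half the angle
  have hnonneg : 0 ≤ (elemRot n k l θ).det := by
    rw [← add_halves θ, ← elemRot_mul_elemRot hkl, det_mul]
    exact mul_self_nonneg _
  exact (mul_self_eq_one_iff.mp hsq).resolve_right (by linarith)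

lemma elemRot_mem_specialOrthogonalGroup (hkl : k ≠ l) (θ : ℝ) :
    elemRot n k l θ ∈ specialOrthogonalGroup (Fin n) ℝ :=
  ⟨elemRot_mem_orthogonalGroup hkl θ, det_elemRot hkl θ⟩

lemma exists_elemRot_mulVec_eq_sqrt (hkl : k ≠ l) (v : Fin n → ℝ) :
    ∃ θ, (elemRot n k l θ *ᵥ v) k = √(v k ^ 2 + v l ^ 2) ∧ (elemRot n k l θ *ᵥ v) l = 0 := by
  obtain ⟨θ, hk, hl⟩ := Real.exists_rotation_eq_sqrt (v k) (v l)
  exact ⟨θ, by simpa [elemRot_mulVec_apply hkl] using hk,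
    by simpa [elemRot_mulVec_apply hkl, hkl.symm] using hl⟩

end elemRot

section rotationSubmonoid

variable {n : ℕ}

def rotationSubmonoid (n : ℕ) (U : Finset (Fin n)) : Submonoid (Matrix (Fin n) (Fin n) ℝ) :=
  Submonoid.closure {A | ∃ k ∈ U, ∃ l ∈ U, k ≠ l ∧ ∃ θ, A = elemRot n k l θ}

lemma elemRot_mem_rotationSubmonoid {U : Finset (Fin n)} {k l : Fin n} (hk : k ∈ U) (hl : l ∈ U)
    (hkl : k ≠ l) (θ : ℝ) : elemRot n k l θ ∈ rotationSubmonoid n U :=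
  Submonoid.subset_closure ⟨k, hk, l, hl, hkl, θ, rfl⟩

lemma rotationSubmonoid_mono {U V : Finset (Fin n)} (h : U ⊆ V) :
    rotationSubmonoid n U ≤ rotationSubmonoid n V :=
  Submonoid.closure_mono fun _ ⟨k, hk, l, hl, hkl, θ, hA⟩ => ⟨k, h hk, l, h hl, hkl, θ, hA⟩

lemma rotationSubmonoid_le_specialOrthogonalGroup (U : Finset (Fin n)) :
    rotationSubmonoid n U ≤ specialOrthogonalGroup (Fin n) ℝ :=
  Submonoid.closure_le.mpr fun _ ⟨_, _, _, _, hkl, θ, hA⟩ =>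
    hA ▸ elemRot_mem_specialOrthogonalGroup hkl θ

lemma elemRot_mem_identityOutside (k l : Fin n) (θ : ℝ) :
    elemRot n k l θ ∈ identityOutside {k, l} := by
  intro r c hrc
  by_cases hrk : r = k <;> by_cases hrl : r = l <;> by_cases hck : c = k <;>
    by_cases hcl : c = l <;>
    simp_all [elemRot, one_apply]

lemma rotationSubmonoid_le_identityOutside (U : Finset (Fin n)) :
    rotationSubmonoid n U ≤ identityOutside U :=
  Submonoid.closure_le.mpr fun _ ⟨k, hk, l, hl, _, θ, hA⟩ =>
    hA ▸ identityOutside_mono (Finset.insert_subset hk (Finset.singleton_subset_iff.mpr hl))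
      (elemRot_mem_identityOutside k l θ)

lemma transpose_mem_rotationSubmonoid {U : Finset (Fin n)} {G : Matrix (Fin n) (Fin n) ℝ}
    (hG : G ∈ rotationSubmonoid n U) : Gᵀ ∈ rotationSubmonoid n U := by
  induction hG using Submonoid.closure_induction with
  | mem _ h =>
    obtain ⟨k, hk, l, hl, hkl, θ, rfl⟩ := h
    rw [transpose_elemRot hkl]
    exact elemRot_mem_rotationSubmonoid hk hl hkl (-θ)
  | one =>
    rw [transpose_one]
    exact one_mem _
  | mul _ _ _ _ hA hB => simpa using mul_mem hB hA

lemma exists_mem_rotationSubmonoid_mulVec (v : Fin n → ℝ) {i : Fin n} {U : Finset (Fin n)}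
    (hU : U.Nonempty) (hi : i ∉ U) :
    ∃ G ∈ rotationSubmonoid n (insert i U), 0 ≤ (G *ᵥ v) i ∧ ∀ r ∈ U, (G *ᵥ v) r = 0 := by
  induction hU using Finset.Nonempty.cons_induction with
  | singleton k =>
    have hik : i ≠ k := by simpa using hi
    obtain ⟨θ, hi', hk'⟩ := exists_elemRot_mulVec_eq_sqrt hik v
    refine ⟨elemRot n i k θ, elemRot_mem_rotationSubmonoid (by simp) (by simp) hik θ, ?_, ?_⟩
    · exact hi' ▸ Real.sqrt_nonneg _
    · simpa using hk'
  | cons k U hkU hU ih =>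
    rw [Finset.mem_cons, not_or] at hi
    obtain ⟨G, hG, -, hGU⟩ := ih hi.2
    obtain ⟨θ, hi', hk'⟩ := exists_elemRot_mulVec_eq_sqrt hi.1 (G *ᵥ v)
    refine ⟨elemRot n i k θ * G, mul_mem (elemRot_mem_rotationSubmonoid (by simp) (by simp) hi.1 θ)
      (rotationSubmonoid_mono (by simp [Finset.insert_subset_insert]) hG), ?_, ?_⟩
    · rw [← mulVec_mulVec, hi']
      exact Real.sqrt_nonneg _
    · intro r hr
      rw [← mulVec_mulVec]
      rcases Finset.mem_cons.mp hr with rfl | hr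
      · exact hk'
      · rw [elemRot_mulVec_apply hi.1, if_neg (ne_of_mem_of_not_mem hr hi.2),
          if_neg (ne_of_mem_of_not_mem hr hkU), hGU r hr]

lemma mem_rotationSubmonoid_of_mem_identityOutside (U : Finset (Fin n))
    {M : Matrix (Fin n) (Fin n) ℝ} (hM : M ∈ specialOrthogonalGroup (Fin n) ℝ)
    (hMU : M ∈ identityOutside U) : M ∈ rotationSubmonoid n U := by
  induction U using Finset.induction_on generalizing M with
  | empty =>
    have : M = 1 := ext fun r c => hMU r c (.inl (Finset.notMem_empty r))
    exact this ▸ one_mem _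
  | insert i U hi ih =>
    rcases U.eq_empty_or_nonempty with rfl | hU
    · rw [Finset.insert_empty] at hMU
      exact eq_one_of_mem_identityOutside_singleton hMU hM.2 ▸ one_mem _
    obtain ⟨G, hG, hGi, hGU⟩ := exists_mem_rotationSubmonoid_mulVec (M *ᵥ Pi.single i 1) hU hi
    set N := G * M
    have hN : N ∈ specialOrthogonalGroup (Fin n) ℝ :=
      mul_mem (rotationSubmonoid_le_specialOrthogonalGroup _ hG) hM
    have hNiU : N ∈ identityOutside (insert i U) :=
      mul_mem (rotationSubmonoid_le_identityOutside _ hG) hMU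
    have hcol : N *ᵥ Pi.single i 1 = Pi.single i ((N *ᵥ Pi.single i 1) i) := by
      funext r
      by_cases hri : r = i
      · simp [hri]
      rw [Pi.single_eq_of_ne hri]
      by_cases hrU : r ∈ U
      · rw [← mulVec_mulVec]; exact hGU r hrU
      · simpa [mulVec_single_one, hri] using hNiU r i (.inl (by simp [hri, hrU]))
    have hNi : N *ᵥ Pi.single i 1 = Pi.single i 1 := by
      rwa [eq_one_of_mulVec_single_eq_single hN.1 hcol (by rwa [← mulVec_mulVec])] at hcol
    have hNU : N ∈ identityOutside U := mem_identityOutside_of_mem_insert hNiU hNi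
      (transpose_mulVec_eq_of_mulVec_eq hN.1 hNi)
    have hGM : Gᵀ * N = M := by
      rw [← mul_assoc, (mem_orthogonalGroup_iff' _ _).mp
        (rotationSubmonoid_le_specialOrthogonalGroup _ hG).1, one_mul]
    exact hGM ▸ mul_mem (transpose_mem_rotationSubmonoid hG)
      (rotationSubmonoid_mono (Finset.subset_insert i U) (ih hN hNU))

theorem rotationSubmonoid_univ :
    rotationSubmonoid n Finset.univ = specialOrthogonalGroup (Fin n) ℝ :=
  le_antisymm (rotationSubmonoid_le_specialOrthogonalGroup _) fun _ hM =>
    mem_rotationSubmonoid_of_mem_identityOutside _ hM fun _ _ h => by simp at h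

end rotationSubmonoid

/-- An orthogonal matrix of determinant 1 is a product of elementary rotation
    matrices. -/
theorem orthogonal_eq_prod_elemRot (n : ℕ) (M : Matrix (Fin n) (Fin n) ℝ)
    (horth : M * M.transpose = 1) (hdet : M.det = 1) :
    ∃ L : List (Matrix (Fin n) (Fin n) ℝ),
      (∀ A ∈ L, ∃ (k l : Fin n) (θ : ℝ), k ≠ l ∧ A = elemRot n k l θ) ∧
      M = L.prod := by
  have hM : M ∈ rotationSubmonoid n Finset.univ :=
    rotationSubmonoid_univ.ge ⟨(mem_orthogonalGroup_iff _ _).mpr horth, hdet⟩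
  obtain ⟨L, hL, rfl⟩ := Submonoid.exists_list_of_mem_closure hM
  refine ⟨L, fun A hA => ?_, rfl⟩
  obtain ⟨k, -, l, -, hkl, θ, rfl⟩ := hL A hA
  exact ⟨k, l, θ, hkl, rfl⟩
end

section
/- If P = {a ∈ ℝ³ : n·a = e} is a plane, then π⁻¹(P) ∪ {(0,0,0,1)} = Π ∩ S³ where Π = {x ∈ ℝ⁴ : (n, e) · x = e}. -/
/-- The unit three-sphere in ℝ⁴. -/
noncomputable def S3 : Set (ℝ × ℝ × ℝ × ℝ) :=
  {x | x.1 ^ 2 + x.2.1 ^ 2 + x.2.2.1 ^ 2 + x.2.2.2 ^ 2 = 1}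

/-- Stereographic projection S³ ∖ {(0,0,0,1)} → ℝ³. -/
noncomputable def stereo4 (x : ℝ × ℝ × ℝ × ℝ) : ℝ × ℝ × ℝ :=
  (x.1 / (1 - x.2.2.2), x.2.1 / (1 - x.2.2.2), x.2.2.1 / (1 - x.2.2.2))

/-- The inverse stereographic image of a plane {a : n·a = e} in ℝ³, together
    with the north pole, is the intersection of S³ with {x : (n,e)·x = e}. -/
theorem preimage_plane_eq_plane_cap (n : ℝ × ℝ × ℝ) (e : ℝ) (hn : n ≠ 0) :
    {x ∈ S3 | x ≠ (0, 0, 0, 1) ∧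
        n.1 * (stereo4 x).1 + n.2.1 * (stereo4 x).2.1 + n.2.2 * (stereo4 x).2.2 = e} ∪
      {((0 : ℝ), (0 : ℝ), (0 : ℝ), (1 : ℝ))} =
      {x ∈ S3 | n.1 * x.1 + n.2.1 * x.2.1 + n.2.2 * x.2.2.1 + e * x.2.2.2 = e} := by
  ext ⟨a, b, c, d⟩
  simp only [Set.mem_union, Set.mem_setOf_eq, Set.mem_singleton_iff, S3, stereo4,
    Prod.mk.injEq, ne_eq]
  constructor
  · rintro (⟨hS, hne, hp⟩ | ⟨ha, hb, hc, hd⟩)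
    · have hd1 : d ≠ 1 := by
        intro h
        subst h
        have : a = 0 ∧ b = 0 ∧ c = 0 := by
          constructor
          · nlinarith [sq_nonneg a, sq_nonneg b, sq_nonneg c]
          constructor
          · nlinarith [sq_nonneg a, sq_nonneg b, sq_nonneg c]
          · nlinarith [sq_nonneg a, sq_nonneg b, sq_nonneg c]
        exact hne ⟨this.1, this.2.1, this.2.2, rfl⟩
      have h1d : (1 - d) ≠ 0 := sub_ne_zero.mpr (Ne.symm hd1)
      refine ⟨hS, ?_⟩
      field_simp at hp
      nlinarith [hp]
    · subst ha; subst hb; subst hc; subst hd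
      norm_num
  · rintro ⟨hS, hp⟩
    by_cases hd1 : d = 1
    · subst hd1
      right
      refine ⟨?_, ?_, ?_, rfl⟩ <;>
        nlinarith [sq_nonneg a, sq_nonneg b, sq_nonneg c]
    · left
      have h1d : (1 - d) ≠ 0 := sub_ne_zero.mpr (Ne.symm hd1)
      refine ⟨hS, ?_, ?_⟩
      · rintro ⟨-, -, -, h⟩; exact hd1 h
      · field_simp
        nlinarith [hp]
end
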